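/- arXiv:0903.1973 — 7 statements merged into one kernel-verified Lean document; each statement's English description precedes it below -/
import Mathlib

section
/- Let A be a unital associative ℂ-algebra endowed with an involution a ↦ a*. If for every self-adjoint element a = a* ∈ A one has −1 ∉ σ_A(a²), then A is hermitian, i.e. σ_A(a) ⊆ ℝ for every a = a* ∈ A. -/
/-! If `z = x + i y ∈ σ(a)` with `a` self-adjoint and `y ≠ 0`, then `b = y⁻¹ (a - x)` is again
self-adjoint and `i ∈ σ(b)`, so `-1 = i² ∈ σ(b²)`. -/

open Complex

theorem spectrum.smul_sub_mem_smul_sub {𝕜 A : Type*} [Field 𝕜] [Ring A] [Algebra 𝕜 A]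
    {a : A} {z w c : 𝕜} (hc : c ≠ 0) (hz : z ∈ spectrum 𝕜 a) :
    c • (z - w) ∈ spectrum 𝕜 (c • (a - algebraMap 𝕜 A w)) := by
  have hsub : z - w ∈ spectrum 𝕜 (a - algebraMap 𝕜 A w) := by
    rw [← spectrum.sub_singleton_eq]
    exact Set.sub_mem_sub hz rfl
  exact spectrum.smul_mem_smul_iff (r := Units.mk0 c hc) |>.mpr hsub

theorem IsSelfAdjoint.ofReal_smul_sub_algebraMap {A : Type*} [Ring A] [Algebra ℂ A] [StarRing A]
    [StarModule ℂ A] {a : A} (ha : IsSelfAdjoint a) (x y : ℝ) :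
    IsSelfAdjoint ((y : ℂ) • (a - algebraMap ℂ A x)) :=
  have hx : IsSelfAdjoint (x : ℂ) := conj_ofReal x
  have hy : IsSelfAdjoint (y : ℂ) := conj_ofReal y
  hy.smul (ha.sub (hx.algebraMap A))

theorem exists_isSelfAdjoint_I_mem_spectrum {A : Type*} [Ring A] [Algebra ℂ A] [StarRing A]
    [StarModule ℂ A] {a : A} (ha : IsSelfAdjoint a) {z : ℂ} (hz : z ∈ spectrum ℂ a)
    (him : z.im ≠ 0) : ∃ b : A, IsSelfAdjoint b ∧ I ∈ spectrum ℂ b := by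
  refine ⟨_, ha.ofReal_smul_sub_algebraMap z.re z.im⁻¹, ?_⟩
  have hI : ((z.im⁻¹ : ℝ) : ℂ) • (z - z.re) = I := by
    have him' : (z.im : ℂ) ≠ 0 := ofReal_ne_zero.mpr him
    rw [show z - z.re = z.im * I by apply Complex.ext <;> simp, smul_eq_mul, ofReal_inv,
      inv_mul_cancel_left₀ him']
  rw [← hI]
  exact spectrum.smul_sub_mem_smul_sub (by simpa using him) hz

/-- If a unital associative ℂ-algebra with involution satisfies
`-1 ∉ σ(a²)` for every self-adjoint `a`, then it is hermitian:
the spectrum of every self-adjoint element is real. -/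
theorem stmt_0 (A : Type*) [Ring A] [Algebra ℂ A] [StarRing A] [StarModule ℂ A]
    (h : ∀ a : A, star a = a → (-1 : ℂ) ∉ spectrum ℂ (a ^ 2)) :
    ∀ a : A, star a = a → ∀ z ∈ spectrum ℂ a, z.im = 0 := by
  intro a ha z hz
  by_contra him
  obtain ⟨b, hb, hIb⟩ := exists_isSelfAdjoint_I_mem_spectrum ha hz him
  have hsq := spectrum.pow_mem_pow b 2 hIb
  rw [I_sq] at hsq
  exact h b hb hsq
end

section
/- Let A be a continuous inverse algebra and let p ∈ A be an idempotent. Then the corner algebra pAp with unit p, endowed with the subspace topology, is again a continuous inverse algebra: an element x ∈ pAp is invertible in pAp if and only if x + 1 − p is invertible in A; the set of elements of pAp invertible in pAp is open in pAp; and the inversion map on this set (sending x to its inverse relative to the unit p) is continuous. -/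
/-!
For `x, y` in the corner `pAp` one has `(x + 1 - p) * (y + 1 - p) = x * y + 1 - p`, so a
`p`-inverse `b` of `x` makes `b + 1 - p` an inverse of `x + 1 - p`. Conversely, if `v` inverts
`u = x + 1 - p` in `A`, then `p * u = x = u * p` shows that `p * v * p` is a `p`-inverse of `x`.
Thus the invertible elements of `pAp` are the preimage of `Aˣ` under the continuous map
`x ↦ x + 1 - p`, and `x ↦ p * (x + 1 - p)⁻¹ * p` is a continuous inversion on them.
-/

section Corner

variable {R : Type*} [Ring R] {p x y : R}

def IsCornerInvertible (p x : R) : Prop :=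
  ∃ b : R, p * b * p = b ∧ x * b = p ∧ b * x = p

noncomputable def cornerInverse (p x : R) : R :=
  p * Ring.inverse (x + 1 - p) * p

namespace IsIdempotentElem

theorem mul_corner_eq (hp : IsIdempotentElem p) (hx : p * x * p = x) : p * x = x := by
  nth_rw 1 [← hx]
  rw [← mul_assoc, ← mul_assoc, hp.eq, hx]

theorem corner_mul_eq (hp : IsIdempotentElem p) (hx : p * x * p = x) : x * p = x := by
  nth_rw 1 [← hx]
  rw [mul_assoc, hp.eq, hx]

theorem mul_mul_mem_corner (hp : IsIdempotentElem p) (w : R) :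
    p * (p * w * p) * p = p * w * p := by
  rw [← mul_assoc, ← mul_assoc, hp.eq, mul_assoc, hp.eq]

theorem corner_add_one_sub_mul (hp : IsIdempotentElem p) (hx : p * x * p = x)
    (hy : p * y * p = y) : (x + 1 - p) * (y + 1 - p) = x * y + 1 - p := by
  calc (x + 1 - p) * (y + 1 - p) = x * y + (x - x * p) + (y - p * y) + (p * p - p) + 1 - p := by
        noncomm_ring
    _ = x * y + 1 - p := by
        rw [hp.corner_mul_eq hx, hp.mul_corner_eq hy, hp.eq]
        simp only [sub_self, add_zero]

theorem isUnit_add_one_sub_of_isCornerInvertible (hp : IsIdempotentElem p)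
    (hx : p * x * p = x) (hinv : IsCornerInvertible p x) : IsUnit (x + 1 - p) := by
  obtain ⟨b, hb, hxb, hbx⟩ := hinv
  refine ⟨⟨x + 1 - p, b + 1 - p, ?_, ?_⟩, rfl⟩
  · rw [hp.corner_add_one_sub_mul hx hb, hxb, add_sub_cancel_left]
  · rw [hp.corner_add_one_sub_mul hb hx, hbx, add_sub_cancel_left]

theorem cornerInverse_spec (hp : IsIdempotentElem p) (hx : p * x * p = x)
    (hu : IsUnit (x + 1 - p)) :
    p * cornerInverse p x * p = cornerInverse p x ∧
      x * cornerInverse p x = p ∧ cornerInverse p x * x = p := by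
  set v := Ring.inverse (x + 1 - p)
  have hpu : p * (x + 1 - p) = x := by
    rw [mul_sub, mul_add, mul_one, hp.eq, hp.mul_corner_eq hx, add_sub_cancel_right]
  have hup : (x + 1 - p) * p = x := by
    rw [sub_mul, add_mul, one_mul, hp.eq, hp.corner_mul_eq hx, add_sub_cancel_right]
  have hxv : x * v = p := by
    rw [← hpu, mul_assoc, Ring.mul_inverse_cancel _ hu, mul_one]
  have hvx : v * x = p := by
    rw [← hup, ← mul_assoc, Ring.inverse_mul_cancel _ hu, one_mul]
  refine ⟨hp.mul_mul_mem_corner v, ?_, ?_⟩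
  · rw [cornerInverse, ← mul_assoc, ← mul_assoc, hp.corner_mul_eq hx, hxv, hp.eq]
  · rw [cornerInverse, mul_assoc, hp.mul_corner_eq hx, mul_assoc, hvx, hp.eq]

theorem isCornerInvertible_iff_isUnit (hp : IsIdempotentElem p) (hx : p * x * p = x) :
    IsCornerInvertible p x ↔ IsUnit (x + 1 - p) :=
  ⟨hp.isUnit_add_one_sub_of_isCornerInvertible hx,
    fun hu => ⟨cornerInverse p x, hp.cornerInverse_spec hx hu⟩⟩

theorem isOpen_setOf_isCornerInvertible [TopologicalSpace R] [IsTopologicalAddGroup R]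
    (hp : IsIdempotentElem p) (hopen : IsOpen {a : R | IsUnit a}) :
    IsOpen {x : {y : R // p * y * p = y} | IsCornerInvertible p (x : R)} := by
  have hpre : {x : {y : R // p * y * p = y} | IsCornerInvertible p (x : R)} =
      (fun x : {y : R // p * y * p = y} => (x : R) + 1 - p) ⁻¹' {a : R | IsUnit a} := by
    ext x
    exact hp.isCornerInvertible_iff_isUnit x.2
  rw [hpre]
  exact hopen.preimage (by fun_prop)

theorem continuousOn_cornerInverse [TopologicalSpace R] [IsTopologicalRing R]
    (hp : IsIdempotentElem p) (hcont : ContinuousOn Ring.inverse {a : R | IsUnit a}) :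
    ContinuousOn (cornerInverse p) {x : R | p * x * p = x ∧ IsCornerInvertible p x} := by
  have hmaps : Set.MapsTo (fun a : R => a + 1 - p)
      {x : R | p * x * p = x ∧ IsCornerInvertible p x} {a : R | IsUnit a} :=
    fun x ⟨hx, hinv⟩ => (hp.isCornerInvertible_iff_isUnit hx).mp hinv
  have hinverse : ContinuousOn (fun a : R => Ring.inverse (a + 1 - p))
      {x : R | p * x * p = x ∧ IsCornerInvertible p x} :=
    hcont.comp (by fun_prop) hmaps
  exact (continuousOn_const.mul hinverse).mul continuousOn_const

end IsIdempotentElem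

end Corner

theorem stmt_3_general (A : Type*) [Ring A]
    [TopologicalSpace A] [IsTopologicalRing A]
    (hopen : IsOpen {a : A | IsUnit a})
    (hcont : ContinuousOn Ring.inverse {a : A | IsUnit a})
    (p : A) (hp : p * p = p) :
    (∀ x : A, p * x * p = x →
      ((∃ b : A, p * b * p = b ∧ x * b = p ∧ b * x = p) ↔ IsUnit (x + 1 - p))) ∧
    IsOpen {x : {y : A // p * y * p = y} |
      ∃ b : A, p * b * p = b ∧ (x : A) * b = p ∧ b * (x : A) = p} ∧
    ∃ ι : A → A,
      ContinuousOn ι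
        {x : A | p * x * p = x ∧ ∃ b : A, p * b * p = b ∧ x * b = p ∧ b * x = p} ∧
      ∀ x : A, p * x * p = x → (∃ b : A, p * b * p = b ∧ x * b = p ∧ b * x = p) →
        p * ι x * p = ι x ∧ x * ι x = p ∧ ι x * x = p :=
  have hp : IsIdempotentElem p := hp
  ⟨fun _ hx => hp.isCornerInvertible_iff_isUnit hx,
    hp.isOpen_setOf_isCornerInvertible hopen,
    cornerInverse p, hp.continuousOn_cornerInverse hcont,
    fun _ hx hinv =>
      hp.cornerInverse_spec hx (hp.isUnit_add_one_sub_of_isCornerInvertible hx hinv)⟩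

/-- If `A` is a continuous inverse algebra and `p ∈ A` an idempotent, then the corner
algebra `pAp` (with unit `p`, subspace topology) is again a continuous inverse algebra:
`x ∈ pAp` is invertible in `pAp` iff `x + 1 - p` is invertible in `A`; the set of
invertible elements of `pAp` is open in `pAp`; and inversion (relative to the unit `p`)
is continuous on this set. -/
theorem stmt_3 (A : Type*) [Ring A] [Algebra ℂ A]
    [TopologicalSpace A] [IsTopologicalRing A] [T2Space A]
    [LocallyConvexSpace ℝ A] [ContinuousSMul ℂ A]
    (hopen : IsOpen {a : A | IsUnit a})
    (hcont : ContinuousOn Ring.inverse {a : A | IsUnit a})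
    (p : A) (hp : p * p = p) :
    (∀ x : A, p * x * p = x →
      ((∃ b : A, p * b * p = b ∧ x * b = p ∧ b * x = p) ↔ IsUnit (x + 1 - p))) ∧
    IsOpen {x : {y : A // p * y * p = y} |
      ∃ b : A, p * b * p = b ∧ (x : A) * b = p ∧ b * (x : A) = p} ∧
    ∃ ι : A → A,
      ContinuousOn ι
        {x : A | p * x * p = x ∧ ∃ b : A, p * b * p = b ∧ x * b = p ∧ b * x = p} ∧
      ∀ x : A, p * x * p = x → (∃ b : A, p * b * p = b ∧ x * b = p ∧ b * x = p) →
        p * ι x * p = ι x ∧ x * ι x = p ∧ ι x * x = p :=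
  stmt_3_general A hopen hcont p hp
end

section
/- Let A be a complete hermitian continuous inverse algebra with continuous involution, and let p = p* = p² ∈ A be a self-adjoint idempotent. Then for every invertible element a ∈ A^×, the element p a* a p is invertible in the corner algebra pAp, i.e. there exists b ∈ pAp with (p a* a p)·b = b·(p a* a p) = p. -/
/-!
Conjugating `p` by `a` gives an idempotent `k = a p a⁻¹` whose range is that of `c = a p`.
Since `d = k - k*` is skew-adjoint, `i d` is self-adjoint, so by hermiticity `±i ∉ σ(i d)` and
`1 - d² = (i - i d)(-i - i d)` is invertible. Kaplansky's formula `P = k k* (1 - d²)⁻¹` then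
yields a self-adjoint idempotent with `P k = k` and `k P = P`, and with `u = p a⁻¹` the element
`u P u*` inverts `c* c = p a* a p` in `pAp`.
-/

open scoped Ring

theorem IsIdempotentElem.units_mul_mul_inv {M : Type*} [Monoid M] {p : M}
    (hp : IsIdempotentElem p) (a : Mˣ) : IsIdempotentElem (a * p * ↑a⁻¹) := by
  simp only [IsIdempotentElem, mul_assoc, Units.inv_mul_cancel_left]
  rw [← mul_assoc p p, hp.eq]

section Ring
variable {R : Type*} [Ring R]

theorem IsIdempotentElem.mul_one_sub_mul_self_sub {e f : R} (he : IsIdempotentElem e)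
    (hf : IsIdempotentElem f) : e * (1 - (e - f) * (e - f)) = e * f * e := by
  simp only [mul_sub, sub_mul, mul_one, ← mul_assoc, he.eq]
  rw [mul_assoc e f f, hf.eq]
  abel

theorem IsIdempotentElem.one_sub_mul_self_sub_mul {e f : R} (he : IsIdempotentElem e)
    (hf : IsIdempotentElem f) : (1 - (e - f) * (e - f)) * e = e * f * e := by
  simp only [mul_sub, sub_mul, one_mul, mul_assoc, he.eq]
  rw [← mul_assoc f f e, hf.eq]
  abel

theorem IsIdempotentElem.commute_inverse_one_sub_mul_self_sub {e f : R}
    (he : IsIdempotentElem e) (hf : IsIdempotentElem f) :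
    Commute e (1 - (e - f) * (e - f))⁻¹ʳ := by
  have h : Commute e (1 - (e - f) * (e - f)) :=
    (he.mul_one_sub_mul_self_sub hf).trans (he.one_sub_mul_self_sub_mul hf).symm
  by_cases hu : IsUnit (1 - (e - f) * (e - f))
  · obtain ⟨w, hw⟩ := hu
    rw [← hw, Ring.inverse_unit]
    exact (hw ▸ h).units_inv_right
  · rw [Ring.inverse_non_unit _ hu]
    exact Commute.zero_right e

variable [StarRing R]

theorem exists_isStarProjection_mul_eq_of_isIdempotentElem {k : R} (hk : IsIdempotentElem k)
    (hΔ : IsUnit (1 - (k - star k) * (k - star k))) :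
    ∃ P : R, IsStarProjection P ∧ P * k = k ∧ k * P = P := by
  set δ := (1 - (k - star k) * (k - star k))⁻¹ʳ
  have hδ_star : IsSelfAdjoint δ := by
    simp only [δ, IsSelfAdjoint, ← Ring.inverse_star, star_sub, star_one, star_mul, star_star,
      ← neg_sub k (star k), neg_mul_neg]
  have hkδ : Commute k δ := hk.commute_inverse_one_sub_mul_self_sub hk.star
  have hlδ : Commute (star k) δ := by
    simpa only [δ, ← neg_sub k, neg_mul_neg] using
      hk.star.commute_inverse_one_sub_mul_self_sub hk
  have hklk : k * star k * k * δ = k := by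
    rw [← hk.mul_one_sub_mul_self_sub hk.star, mul_assoc, Ring.mul_inverse_cancel _ hΔ, mul_one]
  have hPk : k * star k * δ * k = k := by rw [mul_assoc _ δ, hkδ.symm.eq, ← mul_assoc, hklk]
  refine ⟨k * star k * δ, ⟨?_, ?_⟩, hPk, ?_⟩
  · calc k * star k * δ * (k * star k * δ) = k * star k * δ * k * star k * δ := by
          simp only [mul_assoc]
      _ = k * star k * δ := by rw [hPk]
  · rw [IsSelfAdjoint, star_mul, star_mul, star_star, hδ_star.star_eq]
    exact (hkδ.mul_left hlδ).symm.eq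
  · rw [← mul_assoc, ← mul_assoc, hk.eq]

theorem exists_corner_inverse_star_mul_self {p P c u : R} (hp : IsStarProjection p)
    (hP : IsSelfAdjoint P) (huc : u * c = p) (hpu : p * u = u) (hPc : P * c = c)
    (hcuP : c * u * P = P) :
    ∃ b : R, p * b * p = b ∧ star c * c * b = p ∧ b * (star c * c) = p := by
  have hup : star u * p = star u := by
    simpa only [star_mul, hp.isSelfAdjoint.star_eq] using congrArg star hpu
  refine ⟨u * P * star u, ?_, ?_, ?_⟩
  · calc p * (u * P * star u) * p = p * u * P * (star u * p) := by simp only [mul_assoc]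
      _ = u * P * star u := by rw [hpu, hup]
  · calc star c * c * (u * P * star u) = star c * (c * u * P) * star u := by
          simp only [mul_assoc]
      _ = star (u * (P * c)) := by rw [hcuP, star_mul, star_mul, hP.star_eq, mul_assoc]
      _ = p := by rw [hPc, huc, hp.isSelfAdjoint.star_eq]
  · calc u * P * star u * (star c * c) = u * star (c * u * P) * c := by
          rw [star_mul, star_mul, hP.star_eq]; simp only [mul_assoc]
      _ = p := by rw [hcuP, hP.star_eq, mul_assoc, hPc, huc]

theorem exists_corner_inverse_of_range_projection {p P : R} (hp : IsStarProjection p) (a : Rˣ)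
    (hP : IsSelfAdjoint P) (hPk : P * (a * p * ↑a⁻¹) = a * p * ↑a⁻¹)
    (hkP : a * p * ↑a⁻¹ * P = P) :
    ∃ b : R,
      p * b * p = b ∧ p * star ↑a * ↑a * p * b = p ∧ b * (p * star ↑a * ↑a * p) = p := by
  have hpp := hp.isIdempotentElem.eq
  have hcu : a * p * (p * ↑a⁻¹) = a * p * ↑a⁻¹ := by
    rw [mul_assoc, ← mul_assoc p, hpp, ← mul_assoc]
  have hkc : a * p * ↑a⁻¹ * (a * p) = a * p := by
    rw [mul_assoc, Units.inv_mul_cancel_left, mul_assoc, hpp]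
  have hcc : p * star ↑a * ↑a * p = star (a * p : R) * (a * p) := by
    rw [star_mul, hp.isSelfAdjoint.star_eq]; simp only [mul_assoc]
  rw [hcc]
  refine exists_corner_inverse_star_mul_self hp hP ?_ ?_ ?_ (by rw [hcu, hkP])
  · rw [mul_assoc, Units.inv_mul_cancel_left, hpp]
  · rw [← mul_assoc, hpp]
  · rw [← hkc, ← mul_assoc, hPk]

end Ring

section Hermitian
variable {A : Type*} [Ring A] [Algebra ℂ A]

theorem isUnit_one_add_mul_self_of_spectrum_im_eq_zero {x : A}
    (hx : ∀ z ∈ spectrum ℂ x, z.im = 0) : IsUnit (1 + x * x) := by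
  have hunit : ∀ z : ℂ, z.im ≠ 0 → IsUnit (algebraMap ℂ A z - x) := fun z hz ↦
    spectrum.notMem_iff.1 fun h ↦ hz (hx z h)
  have hfac :
      1 + x * x = (algebraMap ℂ A Complex.I - x) * (algebraMap ℂ A (-Complex.I) - x) := by
    simp only [Algebra.algebraMap_eq_smul_one, sub_mul, mul_sub, smul_mul_assoc, mul_smul_comm,
      one_mul, mul_one]
    match_scalars <;> simp
  rw [hfac]
  exact (hunit _ (by simp)).mul (hunit _ (by simp))

theorem isUnit_one_sub_mul_self_of_star_eq_neg [StarRing A] [StarModule ℂ A]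
    (hherm : ∀ a : A, star a = a → ∀ z ∈ spectrum ℂ a, z.im = 0) {d : A}
    (hd : star d = -d) : IsUnit (1 - d * d) := by
  have hx : star (Complex.I • d) = Complex.I • d := by
    rw [star_smul, hd, Complex.star_def, Complex.conj_I, neg_smul, smul_neg, neg_neg]
  have hxx : (Complex.I • d) * (Complex.I • d) = -(d * d) := by
    rw [smul_mul_smul_comm, Complex.I_mul_I, neg_one_smul]
  simpa only [hxx, ← sub_eq_add_neg] using
    isUnit_one_add_mul_self_of_spectrum_im_eq_zero (hherm _ hx)

end Hermitian

theorem stmt_7_general (A : Type*) [Ring A] [Algebra ℂ A] [StarRing A] [StarModule ℂ A]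
    (hherm : ∀ a : A, star a = a → ∀ z ∈ spectrum ℂ a, z.im = 0)
    (p : A) (hpstar : star p = p) (hp : p * p = p) :
    ∀ a : A, IsUnit a →
      ∃ b : A, p * b * p = b ∧ (p * star a * a * p) * b = p ∧ b * (p * star a * a * p) = p := by
  rintro _ ⟨a, rfl⟩
  have hk : IsIdempotentElem (a * p * ↑a⁻¹) := IsIdempotentElem.units_mul_mul_inv hp a
  obtain ⟨P, hP, hPk, hkP⟩ := exists_isStarProjection_mul_eq_of_isIdempotentElem hk
    (isUnit_one_sub_mul_self_of_star_eq_neg hherm (by rw [star_sub, star_star, neg_sub]))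
  exact exists_corner_inverse_of_range_projection ⟨hp, hpstar⟩ a hP.isSelfAdjoint hPk hkP

/-- In a complete hermitian continuous inverse algebra with continuous involution,
for a self-adjoint idempotent `p` and any invertible `a`, the element `p a* a p`
is invertible in the corner algebra `pAp` (with unit `p`). -/
theorem stmt_7 (A : Type*) [Ring A] [Algebra ℂ A] [StarRing A] [StarModule ℂ A]
    [UniformSpace A] [IsUniformAddGroup A] [CompleteSpace A]
    [IsTopologicalRing A] [T2Space A] [LocallyConvexSpace ℝ A] [ContinuousSMul ℂ A]
    [ContinuousStar A]
    (hopen : IsOpen {a : A | IsUnit a})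
    (hcont : ContinuousOn Ring.inverse {a : A | IsUnit a})
    (hherm : ∀ a : A, star a = a → ∀ z ∈ spectrum ℂ a, z.im = 0)
    (p : A) (hpstar : star p = p) (hp : p * p = p) :
    ∀ a : A, IsUnit a →
      ∃ b : A, p * b * p = b ∧ (p * star a * a * p) * b = p ∧ b * (p * star a * a * p) = p :=
  stmt_7_general A hherm p hpstar hp
end

section
/- Let A be a unital associative ℂ-algebra and let δ: 0 = p₀ < p₁ < ⋯ < pₙ = 1 be a finite totally ordered family of idempotents in A. An element g ∈ A^× satisfies the condition that p_j g p_j is invertible in the corner algebra p_j A p_j for j = 1, …, n if and only if g admits a (then uniquely determined) Gauß decomposition g = x d y, where d ∈ A^× with d and d⁻¹ in D(δ), x ∈ N(1 − δ), and y ∈ N(δ); here 1 − δ denotes the flag 0 = 1 − pₙ < 1 − p_{n−1} < ⋯ < 1 − p₀ = 1. -/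
/-!
Write `e_k = p_{k+1} - p_k`. For the flag `F`, `F.upper` is `Δ(δ)`, `F.lower` is `Δ(1 - δ)`
(`p_k a = p_k a p_k`), and `F.IsUnipotent a` says `Φ_δ(a) = 1`. Both are subrings on which
`a ↦ e_k a e_k` is multiplicative, and a unipotent element of either is a unit there because
`a - 1` is strictly triangular, hence nilpotent; lower statements are upper ones in `Aᵐᵒᵖ`.

If `w_k` inverts `p_k g p_k` in the corner, `v = 1 - ∑ w_k g e_k` is upper unipotent and `g v`
is lower, since `p_k (1 - g w_k) = 0`; symmetrically `u g` is upper for some lower unipotent `u`.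
Then `d = u g v` is both upper and lower, i.e. commutes with the flag, and `g = u⁻¹ d v⁻¹`.
For uniqueness, `x'⁻¹ x d = d' y' y⁻¹` commutes with the flag, and a unipotent element
commuting with the flag is `1`. Conversely, `p_j (x d y) p_j = (p_j x p_j) (p_j d p_j) (p_j y p_j)`.
-/

open Finset

section Corner

variable {A : Type*} [Ring A] {e a b : A}

def IsCornerUnit (e a : A) : Prop :=
  ∃ w, e * w * e = w ∧ a * w = e ∧ w * a = e

lemma IsIdempotentElem.mul_left_eq_of_corner (he : IsIdempotentElem e) (h : e * a * e = a) :
    e * a = a := by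
  rw [← h, ← mul_assoc, ← mul_assoc, he.eq]

lemma IsIdempotentElem.mul_right_eq_of_corner (he : IsIdempotentElem e) (h : e * a * e = a) :
    a * e = a := by
  rw [← h, mul_assoc, he.eq]

lemma IsIdempotentElem.corner_corner (he : IsIdempotentElem e) :
    e * (e * a * e) * e = e * a * e := by
  rw [show e * (e * a * e) * e = e * e * a * (e * e) by simp only [mul_assoc], he.eq]

lemma IsCornerUnit.mul (he : IsIdempotentElem e) (ha : IsCornerUnit e a)
    (hb : IsCornerUnit e b) : IsCornerUnit e (a * b) := by
  obtain ⟨v, hv, hav, hva⟩ := ha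
  obtain ⟨w, hw, hbw, hwb⟩ := hb
  refine ⟨w * v, ?_, ?_, ?_⟩
  · rw [← mul_assoc, he.mul_left_eq_of_corner hw, mul_assoc, he.mul_right_eq_of_corner hv]
  · rw [mul_assoc, ← mul_assoc b, hbw, he.mul_left_eq_of_corner hv, hav]
  · rw [mul_assoc, ← mul_assoc v, hva, ← mul_assoc, he.mul_right_eq_of_corner hw, hwb]

lemma corner_mul_corner_of_left (he : IsIdempotentElem e) (ha : e * a = e * a * e) :
    e * a * e * (e * b * e) = e * (a * b) * e := by
  calc e * a * e * (e * b * e) = e * a * (e * e) * b * e := by simp only [mul_assoc]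
    _ = e * (a * b) * e := by rw [he.eq, ← ha]; simp only [mul_assoc]

lemma corner_mul_corner_of_right (he : IsIdempotentElem e) (hb : b * e = e * b * e) :
    e * a * e * (e * b * e) = e * (a * b) * e := by
  calc e * a * e * (e * b * e) = e * a * ((e * e) * b * e) := by simp only [mul_assoc]
    _ = e * (a * b) * e := by rw [he.eq, ← hb]; simp only [mul_assoc]

lemma isCornerUnit_of_left (he : IsIdempotentElem e) (ha : e * a = e * a * e)
    (hb : e * b = e * b * e) (hab : a * b = 1) (hba : b * a = 1) : IsCornerUnit e (e * a * e) :=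
  ⟨e * b * e, he.corner_corner,
    by rw [corner_mul_corner_of_left he ha, hab, mul_one, he.eq],
    by rw [corner_mul_corner_of_left he hb, hba, mul_one, he.eq]⟩

lemma isCornerUnit_of_right (he : IsIdempotentElem e) (ha : a * e = e * a * e)
    (hb : b * e = e * b * e) (hab : a * b = 1) (hba : b * a = 1) : IsCornerUnit e (e * a * e) :=
  ⟨e * b * e, he.corner_corner,
    by rw [corner_mul_corner_of_right he hb, hab, mul_one, he.eq],
    by rw [corner_mul_corner_of_right he ha, hba, mul_one, he.eq]⟩

lemma mul_one_sub_eq_iff : a * (1 - e) = (1 - e) * a * (1 - e) ↔ e * a = e * a * e := by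
  rw [← sub_eq_zero, ← sub_eq_zero (a := e * a),
    show a * (1 - e) - (1 - e) * a * (1 - e) = e * a - e * a * e by noncomm_ring]

lemma IsCornerUnit.op (h : IsCornerUnit e a) :
    IsCornerUnit (MulOpposite.op e) (MulOpposite.op a) := by
  obtain ⟨w, hw, haw, hwa⟩ := h
  refine ⟨MulOpposite.op w, ?_, ?_, ?_⟩
  · rw [← MulOpposite.op_mul, ← MulOpposite.op_mul, ← mul_assoc, hw]
  · rw [← MulOpposite.op_mul, hwa]
  · rw [← MulOpposite.op_mul, haw]

end Corner

structure IdempotentFlag (A : Type*) [Ring A] (n : ℕ) where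
  p : ℕ → A
  p_zero : p 0 = 0
  p_top : p n = 1
  idem : ∀ k ≤ n, IsIdempotentElem (p k)
  succ_mul : ∀ k < n, p (k + 1) * p k = p k
  mul_succ : ∀ k < n, p k * p (k + 1) = p k

namespace IdempotentFlag

variable {A : Type*} [Ring A] {n : ℕ} (F : IdempotentFlag A n) {a b : A} {j k : ℕ}

lemma p_mul_p_of_le (hjk : j ≤ k) (hk : k ≤ n) : F.p j * F.p k = F.p j := by
  induction k, hjk using Nat.le_induction with
  | base => exact F.idem j hk
  | succ k hjk ih => rw [← ih (by omega), mul_assoc, F.mul_succ k (by omega)]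

lemma p_mul_p_of_ge (hjk : j ≤ k) (hk : k ≤ n) : F.p k * F.p j = F.p j := by
  induction k, hjk using Nat.le_induction with
  | base => exact F.idem j hk
  | succ k hjk ih => rw [← ih (by omega), ← mul_assoc, F.succ_mul k (by omega)]

def blk (k : ℕ) : A := F.p (k + 1) - F.p k

lemma p_mul_blk_of_le (hjk : j ≤ k) (hk : k < n) : F.p j * F.blk k = 0 := by
  rw [blk, mul_sub, F.p_mul_p_of_le (by omega) hk, F.p_mul_p_of_le hjk hk.le, sub_self]

lemma blk_mul_p_of_le (hjk : j ≤ k) (hk : k < n) : F.blk k * F.p j = 0 := by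
  rw [blk, sub_mul, F.p_mul_p_of_ge (by omega) hk, F.p_mul_p_of_ge hjk hk.le, sub_self]

lemma p_mul_blk_of_lt (hkj : k < j) (hj : j ≤ n) : F.p j * F.blk k = F.blk k := by
  rw [blk, mul_sub, F.p_mul_p_of_ge hkj hj, F.p_mul_p_of_ge (by omega) hj]

lemma blk_mul_p_of_lt (hkj : k < j) (hj : j ≤ n) : F.blk k * F.p j = F.blk k := by
  rw [blk, sub_mul, F.p_mul_p_of_le hkj hj, F.p_mul_p_of_le (by omega) hj]

lemma blk_mul_blk (hk : k < n) : F.blk k * F.blk k = F.blk k := by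
  nth_rw 1 [blk]
  rw [sub_mul, F.p_mul_blk_of_lt k.lt_succ_self hk, F.p_mul_blk_of_le le_rfl hk, sub_zero]

lemma blk_mul_blk_of_ne (hj : j < n) (hk : k < n) (hjk : j ≠ k) : F.blk j * F.blk k = 0 := by
  rcases hjk.lt_or_gt with h | h
  · rw [blk, sub_mul, F.p_mul_blk_of_le h hk, F.p_mul_blk_of_le h.le hk, sub_self]
  · nth_rw 2 [blk]
    rw [mul_sub, F.blk_mul_p_of_le h hj, F.blk_mul_p_of_le (by omega) hj, sub_self]

lemma p_succ_eq_add_blk : F.p (k + 1) = F.p k + F.blk k := by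
  rw [blk, add_sub_cancel]

lemma sum_blk : ∑ k ∈ range n, F.blk k = 1 := by
  unfold blk
  rw [sum_range_sub, F.p_top, F.p_zero, sub_zero]

def IsUnipotent (a : A) : Prop := ∀ k < n, F.blk k * a * F.blk k = F.blk k

lemma blk_mul_sum_mul_blk (a : A) (hj : j < n) :
    F.blk j * (∑ k ∈ range n, F.blk k * a * F.blk k) * F.blk j = F.blk j * a * F.blk j := by
  rw [mul_sum, sum_mul, sum_eq_single j]
  · rw [← mul_assoc, ← mul_assoc, F.blk_mul_blk hj, mul_assoc, F.blk_mul_blk hj]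
  · intro k hk hkj
    simp only [← mul_assoc, F.blk_mul_blk_of_ne hj (mem_range.1 hk) (Ne.symm hkj), zero_mul]
  · exact fun hj' => absurd (mem_range.2 hj) hj'

lemma sum_blk_mul_mul_blk_eq_one_iff :
    ∑ k ∈ range n, F.blk k * a * F.blk k = 1 ↔ F.IsUnipotent a := by
  refine ⟨fun h k hk => ?_, fun h => ?_⟩
  · rw [← F.blk_mul_sum_mul_blk a hk, h, mul_one, F.blk_mul_blk hk]
  · rw [sum_congr rfl fun k hk => h k (mem_range.1 hk), F.sum_blk]

def op : IdempotentFlag Aᵐᵒᵖ n where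
  p k := MulOpposite.op (F.p k)
  p_zero := by rw [F.p_zero, MulOpposite.op_zero]
  p_top := by rw [F.p_top, MulOpposite.op_one]
  idem k hk := by rw [IsIdempotentElem, ← MulOpposite.op_mul, (F.idem k hk).eq]
  succ_mul k hk := by rw [← MulOpposite.op_mul, F.mul_succ k hk]
  mul_succ k hk := by rw [← MulOpposite.op_mul, F.succ_mul k hk]

lemma op_blk : F.op.blk k = MulOpposite.op (F.blk k) := by
  rw [blk, blk, MulOpposite.op_sub]; rfl

lemma isUnipotent_op : F.op.IsUnipotent (MulOpposite.op a) ↔ F.IsUnipotent a := by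
  simp only [IsUnipotent, op_blk, ← MulOpposite.op_mul, MulOpposite.op_inj, mul_assoc]

def upper : Subring A where
  carrier := {a | ∀ k ≤ n, a * F.p k = F.p k * a * F.p k}
  mul_mem' {a b} ha hb k hk := by
    calc a * b * F.p k = a * F.p k * b * F.p k := by rw [mul_assoc, hb k hk]; simp only [mul_assoc]
      _ = F.p k * a * (F.p k * b * F.p k) := by rw [ha k hk]; simp only [mul_assoc]
      _ = F.p k * (a * b) * F.p k := by rw [← hb k hk]; simp only [mul_assoc]
  one_mem' k hk := by rw [one_mul, mul_one, (F.idem k hk).eq]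
  add_mem' {a b} ha hb k hk := by rw [add_mul, ha k hk, hb k hk, mul_add, add_mul]
  zero_mem' k hk := by simp
  neg_mem' {a} ha k hk := by rw [neg_mul, ha k hk, mul_neg, neg_mul]

lemma mem_upper : a ∈ F.upper ↔ ∀ k ≤ n, a * F.p k = F.p k * a * F.p k := Iff.rfl

def lower : Subring A := F.op.upper.unop

lemma op_mem_upper : MulOpposite.op a ∈ F.op.upper ↔ a ∈ F.lower := Iff.rfl

lemma mem_lower : a ∈ F.lower ↔ ∀ k ≤ n, F.p k * a = F.p k * a * F.p k := by
  simp only [← op_mem_upper, mem_upper, op, ← MulOpposite.op_mul, MulOpposite.op_inj, mul_assoc]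

lemma op_mem_lower : MulOpposite.op a ∈ F.op.lower ↔ a ∈ F.upper := by
  simp only [mem_lower, mem_upper, op, ← MulOpposite.op_mul, MulOpposite.op_inj, mul_assoc]

lemma mul_blk_of_mem_upper (hb : b ∈ F.upper) (hk : k < n) :
    b * F.blk k = F.p (k + 1) * b * F.blk k := by
  calc b * F.blk k = b * F.p (k + 1) * F.blk k := by
        rw [mul_assoc, F.p_mul_blk_of_lt k.lt_succ_self hk]
    _ = F.p (k + 1) * b * F.blk k := by
        rw [hb (k + 1) hk, mul_assoc _ (F.p (k + 1)), F.p_mul_blk_of_lt k.lt_succ_self hk]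

lemma blk_mul_mul_p_of_mem_upper (ha : a ∈ F.upper) (hk : k < n) :
    F.blk k * a * F.p k = 0 := by
  rw [mul_assoc, ha k hk.le, ← mul_assoc, ← mul_assoc, F.blk_mul_p_of_le le_rfl hk, zero_mul,
    zero_mul]

lemma blk_mul_mul_blk_of_mem_upper (ha : a ∈ F.upper) (hb : b ∈ F.upper) (hk : k < n) :
    F.blk k * (a * b) * F.blk k = F.blk k * a * F.blk k * (F.blk k * b * F.blk k) := by
  calc F.blk k * (a * b) * F.blk k = F.blk k * a * (F.p k + F.blk k) * b * F.blk k := by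
        simp only [← F.p_succ_eq_add_blk, mul_assoc]
        rw [← mul_assoc (F.p (k + 1)) b, ← F.mul_blk_of_mem_upper hb hk]
    _ = F.blk k * a * F.blk k * b * F.blk k := by
        rw [mul_add, add_mul, add_mul, F.blk_mul_mul_p_of_mem_upper ha hk, zero_mul, zero_mul,
          zero_add]
    _ = F.blk k * a * F.blk k * (F.blk k * b * F.blk k) := by
        simp only [mul_assoc]
        rw [← mul_assoc (F.blk k) (F.blk k), F.blk_mul_blk hk]

lemma isUnipotent_mul_of_mem_upper (ha : a ∈ F.upper) (hb : b ∈ F.upper)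
    (hua : F.IsUnipotent a) (hub : F.IsUnipotent b) : F.IsUnipotent (a * b) := fun k hk => by
  rw [F.blk_mul_mul_blk_of_mem_upper ha hb hk, hua k hk, hub k hk, F.blk_mul_blk hk]

lemma isUnipotent_of_mul_eq_one (ha : a ∈ F.upper) (hb : b ∈ F.upper)
    (hua : F.IsUnipotent a) (hab : a * b = 1) : F.IsUnipotent b := fun k hk => by
  have h := F.blk_mul_mul_blk_of_mem_upper ha hb hk
  rw [hab, mul_one, F.blk_mul_blk hk, hua k hk, ← mul_assoc, ← mul_assoc, F.blk_mul_blk hk] at h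
  exact h.symm

lemma mul_p_succ_of_mem_upper (ha : a ∈ F.upper) (hk : k < n)
    (h : F.blk k * a * F.blk k = 0) : a * F.p (k + 1) = F.p k * a * F.p (k + 1) := by
  rw [ha (k + 1) hk, F.p_succ_eq_add_blk, add_mul, add_mul, mul_add (F.blk k * a),
    F.blk_mul_mul_p_of_mem_upper ha hk, h, add_zero, add_zero]

lemma pow_eq_zero_of_mem_upper (ha : a ∈ F.upper) (h : ∀ k < n, F.blk k * a * F.blk k = 0) :
    a ^ n = 0 := by
  have key : ∀ k ≤ n, a ^ k * F.p k = 0 := by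
    intro k hk
    induction k with
    | zero => rw [F.p_zero, mul_zero]
    | succ k ih =>
      rw [pow_succ, mul_assoc, F.mul_p_succ_of_mem_upper ha hk (h k hk), ← mul_assoc,
        ← mul_assoc, ih (by omega), zero_mul, zero_mul]
  rw [← mul_one (a ^ n), ← F.p_top, key n le_rfl]

lemma exists_inverse_of_isUnipotent_of_mem_upper (ha : a ∈ F.upper) (hua : F.IsUnipotent a) :
    ∃ b ∈ F.upper, F.IsUnipotent b ∧ a * b = 1 ∧ b * a = 1 := by
  have hz : a - 1 ∈ F.upper := sub_mem ha (one_mem _)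
  have hnil : IsNilpotent (⟨a - 1, hz⟩ : F.upper) := ⟨n, Subtype.ext <|
    F.pow_eq_zero_of_mem_upper hz fun k hk => by
      rw [mul_sub, sub_mul, hua k hk, mul_one, F.blk_mul_blk hk, sub_self]⟩
  obtain ⟨u, hu⟩ := hnil.isUnit_one_add
  have hu_coe : ((u : F.upper) : A) = a := by rw [hu]; simp
  have h1 : a * ((u⁻¹ : F.upperˣ) : F.upper) = 1 := by
    rw [← hu_coe, ← Subring.coe_mul, u.mul_inv, Subring.coe_one]
  have h2 : ((u⁻¹ : F.upperˣ) : F.upper) * a = 1 := by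
    rw [← hu_coe, ← Subring.coe_mul, u.inv_mul, Subring.coe_one]
  exact ⟨_, Subtype.prop _, F.isUnipotent_of_mul_eq_one ha (Subtype.prop _) hua h1, h1, h2⟩

lemma isUnipotent_mul_of_mem_lower (ha : a ∈ F.lower) (hb : b ∈ F.lower)
    (hua : F.IsUnipotent a) (hub : F.IsUnipotent b) : F.IsUnipotent (a * b) := by
  rw [← F.isUnipotent_op, MulOpposite.op_mul]
  exact F.op.isUnipotent_mul_of_mem_upper (F.op_mem_upper.2 hb) (F.op_mem_upper.2 ha)
    (F.isUnipotent_op.2 hub) (F.isUnipotent_op.2 hua)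

lemma exists_inverse_of_isUnipotent_of_mem_lower (ha : a ∈ F.lower) (hua : F.IsUnipotent a) :
    ∃ b ∈ F.lower, F.IsUnipotent b ∧ a * b = 1 ∧ b * a = 1 := by
  obtain ⟨b, hb, hub, hab, hba⟩ := F.op.exists_inverse_of_isUnipotent_of_mem_upper
    (F.op_mem_upper.2 ha) (F.isUnipotent_op.2 hua)
  refine ⟨b.unop, F.op_mem_upper.1 hb, F.isUnipotent_op.1 hub, ?_, ?_⟩
  · exact MulOpposite.op_injective hba
  · exact MulOpposite.op_injective hab

lemma mem_upper_of_commute (h : ∀ k ≤ n, Commute a (F.p k)) : a ∈ F.upper := fun k hk => by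
  rw [mul_assoc, (h k hk).eq, ← mul_assoc, (F.idem k hk).eq]

lemma mem_lower_of_commute (h : ∀ k ≤ n, Commute a (F.p k)) : a ∈ F.lower :=
  F.mem_lower.2 fun k hk => by rw [mul_assoc, (h k hk).eq, ← mul_assoc, (F.idem k hk).eq]

lemma commute_of_mem_upper_of_mem_lower (hu : a ∈ F.upper) (hl : a ∈ F.lower) :
    ∀ k ≤ n, Commute a (F.p k) := fun k hk =>
  (hu k hk).trans (F.mem_lower.1 hl k hk).symm

lemma eq_one_of_commute_of_isUnipotent (h : ∀ k ≤ n, Commute a (F.p k))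
    (hua : F.IsUnipotent a) : a = 1 := by
  have hblk : ∀ k < n, Commute a (F.blk k) := fun k hk => (h (k + 1) hk).sub_right (h k hk.le)
  calc a = ∑ k ∈ range n, F.blk k * a := by rw [← sum_mul, F.sum_blk, one_mul]
    _ = ∑ k ∈ range n, F.blk k * a * F.blk k := sum_congr rfl fun k hk => by
        rw [mul_assoc, (hblk k (mem_range.1 hk)).eq, ← mul_assoc, F.blk_mul_blk (mem_range.1 hk)]
    _ = 1 := F.sum_blk_mul_mul_blk_eq_one_iff.2 hua

lemma mem_upper_of_p_mul_of_mul_blk (hk : k < n) (hl : F.p k * a = a) (hr : a * F.blk k = a) :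
    a ∈ F.upper := by
  intro j hj
  rcases le_or_gt j k with hjk | hkj
  · have h : a * F.p j = 0 := by rw [← hr, mul_assoc, F.blk_mul_p_of_le hjk hk, mul_zero]
    rw [mul_assoc, h, mul_zero]
  · have h : a * F.p j = a := by rw [← hr, mul_assoc, F.blk_mul_p_of_lt hkj hj]
    rw [mul_assoc, h, ← hl, ← mul_assoc, F.p_mul_p_of_ge hkj.le hj]

lemma blk_mul_mul_blk_eq_zero (hk : k < n) (hl : F.p k * a = a) (hr : a * F.blk k = a)
    (hj : j < n) : F.blk j * a * F.blk j = 0 := by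
  rcases eq_or_ne j k with rfl | hjk
  · rw [← hl, ← mul_assoc, F.blk_mul_p_of_le le_rfl hj, zero_mul, zero_mul]
  · rw [← hr]
    simp only [mul_assoc]
    rw [F.blk_mul_blk_of_ne hk hj (Ne.symm hjk), mul_zero, mul_zero]

lemma mem_lower_of_p_mul_eq_zero (hk : k < n) (hl : F.p k * a = 0) (hr : a * F.blk k = a) :
    a ∈ F.lower := by
  refine F.mem_lower.2 fun j hj => ?_
  rcases le_or_gt j k with hjk | hkj
  · have h : F.p j * a = 0 := by rw [← F.p_mul_p_of_le hjk hk.le, mul_assoc, hl, mul_zero]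
    rw [h, zero_mul]
  · have h : a * F.p j = a := by rw [← hr, mul_assoc, F.blk_mul_p_of_lt hkj hj]
    rw [mul_assoc, h]

lemma exists_upper_unipotent_mul_mem_lower {g : A}
    (hg : ∀ k < n, IsCornerUnit (F.p k) (F.p k * g * F.p k)) :
    ∃ v ∈ F.upper, F.IsUnipotent v ∧ g * v ∈ F.lower := by
  choose! w hw using hg
  have hpw : ∀ k < n, F.p k * w k = w k := fun k hk =>
    (F.idem k hk.le).mul_left_eq_of_corner (hw k hk).1
  have hl : ∀ k ∈ range n, F.p k * (w k * g * F.blk k) = w k * g * F.blk k := fun k hk => by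
    rw [← mul_assoc, ← mul_assoc, hpw k (mem_range.1 hk)]
  have hr : ∀ k ∈ range n, w k * g * F.blk k * F.blk k = w k * g * F.blk k := fun k hk => by
    rw [mul_assoc, F.blk_mul_blk (mem_range.1 hk)]
  refine ⟨1 - ∑ k ∈ range n, w k * g * F.blk k, ?_, fun j hj => ?_, ?_⟩
  · exact sub_mem (one_mem _) (sum_mem fun k hk =>
      F.mem_upper_of_p_mul_of_mul_blk (mem_range.1 hk) (hl k hk) (hr k hk))
  · rw [mul_sub, sub_mul, mul_one, F.blk_mul_blk hj, mul_sum, sum_mul, sum_eq_zero fun k hk =>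
      F.blk_mul_mul_blk_eq_zero (mem_range.1 hk) (hl k hk) (hr k hk) hj, sub_zero]
  · have hg' : g * (1 - ∑ k ∈ range n, w k * g * F.blk k)
        = ∑ k ∈ range n, (1 - g * w k) * g * F.blk k := by
      nth_rw 1 [← F.sum_blk]
      rw [mul_sub, mul_sum, mul_sum, ← sum_sub_distrib]
      exact sum_congr rfl fun k _ => by noncomm_ring
    rw [hg']
    refine sum_mem fun k hk => F.mem_lower_of_p_mul_eq_zero (mem_range.1 hk) ?_ ?_
    · have h : F.p k * (1 - g * w k) = 0 := by
        rw [mul_sub, mul_one, ← mul_assoc, ← hpw k (mem_range.1 hk), ← mul_assoc,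
          (hw k (mem_range.1 hk)).2.1, sub_self]
      rw [← mul_assoc, ← mul_assoc, h, zero_mul, zero_mul]
    · rw [mul_assoc, F.blk_mul_blk (mem_range.1 hk)]

theorem exists_gauss_decomposition {g : A} (hg : IsUnit g)
    (hcor : ∀ k < n, IsCornerUnit (F.p k) (F.p k * g * F.p k)) :
    ∃ x ∈ F.lower, F.IsUnipotent x ∧ ∃ d, IsUnit d ∧ (∀ k ≤ n, Commute d (F.p k)) ∧
      ∃ y ∈ F.upper, F.IsUnipotent y ∧ g = x * d * y := by
  obtain ⟨v, hv, huv, hgv⟩ := F.exists_upper_unipotent_mul_mem_lower hcor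
  obtain ⟨u', hu', huu', hgu'⟩ :=
    F.op.exists_upper_unipotent_mul_mem_lower (g := MulOpposite.op g) fun k hk => by
      have h := (hcor k hk).op
      rwa [MulOpposite.op_mul, MulOpposite.op_mul, ← mul_assoc] at h
  set u := u'.unop
  have hu : u ∈ F.lower := F.op_mem_upper.1 hu'
  have hug : u * g ∈ F.upper := F.op_mem_lower.1 hgu'
  obtain ⟨x, hx, hux, hux', hxu⟩ :=
    F.exists_inverse_of_isUnipotent_of_mem_lower hu (F.isUnipotent_op.1 huu')
  obtain ⟨y, hy, huy, hvy, hyv⟩ := F.exists_inverse_of_isUnipotent_of_mem_upper hv huv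
  refine ⟨x, hx, hux, u * g * v, (IsUnit.mul ⟨⟨u, x, hux', hxu⟩, rfl⟩ hg).mul
      ⟨⟨v, y, hvy, hyv⟩, rfl⟩,
    F.commute_of_mem_upper_of_mem_lower (mul_mem hug hv) (mul_assoc u g v ▸ mul_mem hu hgv),
    y, hy, huy, ?_⟩
  rw [show x * (u * g * v) * y = x * u * g * (v * y) by simp only [mul_assoc], hxu, hvy,
      one_mul, mul_one]

theorem gauss_decomposition_unique {x d y x' d' y' : A}
    (hx : x ∈ F.lower) (hux : F.IsUnipotent x) (hd : IsUnit d)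
    (hdc : ∀ k ≤ n, Commute d (F.p k)) (hy : y ∈ F.upper) (huy : F.IsUnipotent y)
    (hx' : x' ∈ F.lower) (hux' : F.IsUnipotent x') (hd' : IsUnit d')
    (hdc' : ∀ k ≤ n, Commute d' (F.p k)) (hy' : y' ∈ F.upper) (huy' : F.IsUnipotent y')
    (h : x * d * y = x' * d' * y') : x = x' ∧ d = d' ∧ y = y' := by
  obtain ⟨xi, hxi, huxi, hx'xi, hxix'⟩ :=
    F.exists_inverse_of_isUnipotent_of_mem_lower hx' hux'
  obtain ⟨yi, hyi, huyi, hyyi, hyiy⟩ := F.exists_inverse_of_isUnipotent_of_mem_upper hy huy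
  have key : xi * x * d = d' * (y' * yi) := by
    calc xi * x * d = xi * (x * d * y) * yi := by simp only [mul_assoc]; rw [hyyi, mul_one]
      _ = d' * (y' * yi) := by rw [h]; simp only [← mul_assoc]; rw [hxix', one_mul]
  have hc := F.commute_of_mem_upper_of_mem_lower
    (key ▸ mul_mem (F.mem_upper_of_commute hdc') (mul_mem hy' hyi))
    (mul_mem (mul_mem hxi hx) (F.mem_lower_of_commute hdc))
  obtain ⟨u, rfl⟩ := hd
  obtain ⟨u', rfl⟩ := hd'
  have ha : xi * x = 1 := F.eq_one_of_commute_of_isUnipotent (fun k hk => by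
      simpa only [Units.mul_inv_cancel_right] using (hc k hk).mul_left (hdc k hk).units_inv_left)
    (F.isUnipotent_mul_of_mem_lower hxi hx huxi hux)
  have hb : y' * yi = 1 := F.eq_one_of_commute_of_isUnipotent (fun k hk => by
      simpa only [key, Units.inv_mul_cancel_left] using
        (hdc' k hk).units_inv_left.mul_left (hc k hk))
    (F.isUnipotent_mul_of_mem_upper hy' hyi huy' huyi)
  refine ⟨?_, ?_, ?_⟩
  · calc x = x' * xi * x := by rw [hx'xi, one_mul]
      _ = x' := by rw [mul_assoc, ha, mul_one]
  · rw [ha, hb, one_mul, mul_one] at key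
    exact key
  · calc y = y' * yi * y := by rw [hb, one_mul]
      _ = y' := by rw [mul_assoc, hyiy, mul_one]

theorem isCornerUnit_of_gauss {x d y : A} (hx : x ∈ F.lower) (hux : F.IsUnipotent x)
    (hd : IsUnit d) (hdc : ∀ k ≤ n, Commute d (F.p k)) (hy : y ∈ F.upper)
    (huy : F.IsUnipotent y) (hj : j ≤ n) :
    IsCornerUnit (F.p j) (F.p j * (x * d * y) * F.p j) := by
  obtain ⟨x', hx', -, hxx', hx'x⟩ := F.exists_inverse_of_isUnipotent_of_mem_lower hx hux
  obtain ⟨y', hy', -, hyy', hy'y⟩ := F.exists_inverse_of_isUnipotent_of_mem_upper hy huy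
  obtain ⟨u, rfl⟩ := hd
  have he := F.idem j hj
  have hl : ∀ a ∈ F.lower, F.p j * a = F.p j * a * F.p j := fun a ha => F.mem_lower.1 ha j hj
  rw [← corner_mul_corner_of_right he (hy j hj), ← corner_mul_corner_of_left he (hl x hx)]
  exact ((isCornerUnit_of_left he (hl x hx) (hl x' hx') hxx' hx'x).mul he
    (isCornerUnit_of_left he (hl _ (F.mem_lower_of_commute hdc))
      (hl _ (F.mem_lower_of_commute fun k hk => (hdc k hk).units_inv_left)) u.mul_inv
      u.inv_mul)).mul he (isCornerUnit_of_right he (hy j hj) (hy' j hj) hyy' hy'y)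

end IdempotentFlag

theorem stmt_11_general (A : Type*) [Ring A]
    (n : ℕ) (p : ℕ → A)
    (h0 : p 0 = 0) (h1 : p n = 1)
    (hid : ∀ k ≤ n, p k * p k = p k)
    (hord : ∀ k < n, p (k + 1) * p k = p k ∧ p k * p (k + 1) = p k ∧ p k ≠ p (k + 1))
    (g : A) (hg : IsUnit g) :
    (∀ j, 1 ≤ j → j ≤ n →
      ∃ w : A, p j * w * p j = w ∧ (p j * g * p j) * w = p j ∧ w * (p j * g * p j) = p j)
    ↔
    ∃! t : A × A × A,
      (IsUnit t.2.1 ∧ (∀ k ≤ n, t.2.1 * p k = p k * t.2.1) ∧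
        (∃ d' : A, t.2.1 * d' = 1 ∧ d' * t.2.1 = 1 ∧ ∀ k ≤ n, d' * p k = p k * d')) ∧
      ((∀ k ≤ n, t.1 * (1 - p k) = (1 - p k) * t.1 * (1 - p k)) ∧
        (∑ k ∈ Finset.range n, (p (k + 1) - p k) * t.1 * (p (k + 1) - p k)) = 1) ∧
      ((∀ k ≤ n, t.2.2 * p k = p k * t.2.2 * p k) ∧
        (∑ k ∈ Finset.range n, (p (k + 1) - p k) * t.2.2 * (p (k + 1) - p k)) = 1) ∧
      g = t.1 * t.2.1 * t.2.2 := by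
  let F : IdempotentFlag A n :=
    ⟨p, h0, h1, hid, fun k hk => (hord k hk).1, fun k hk => (hord k hk).2.1⟩
  have hlower (x : A) :
      (∀ k ≤ n, x * (1 - p k) = (1 - p k) * x * (1 - p k)) ↔ x ∈ F.lower := by
    rw [F.mem_lower]
    exact forall₂_congr fun k _ => mul_one_sub_eq_iff
  have hunip (x : A) : ∑ k ∈ Finset.range n, (p (k + 1) - p k) * x * (p (k + 1) - p k) = 1 ↔
      F.IsUnipotent x :=
    F.sum_blk_mul_mul_blk_eq_one_iff
  simp only [hlower, hunip]
  constructor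
  · intro hcor
    have hcor' : ∀ k < n, IsCornerUnit (F.p k) (F.p k * g * F.p k) := fun k hk => by
      rcases k.eq_zero_or_pos with rfl | hk0
      · exact ⟨0, by simp [F.p_zero]⟩
      · exact hcor k hk0 hk.le
    obtain ⟨x, hx, hux, d, hd, hdc, y, hy, huy, rfl⟩ := F.exists_gauss_decomposition hg hcor'
    refine ⟨(x, d, y), ⟨⟨hd, hdc, ↑hd.unit⁻¹, hd.mul_val_inv, hd.val_inv_mul,
      fun k hk => (hdc k hk).units_inv_left⟩, ⟨hx, hux⟩, ⟨hy, huy⟩, rfl⟩, ?_⟩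
    rintro ⟨x', d', y'⟩ ⟨⟨hd', hdc', -⟩, ⟨hx', hux'⟩, ⟨hy', huy'⟩, h⟩
    obtain ⟨rfl, rfl, rfl⟩ :=
      F.gauss_decomposition_unique hx' hux' hd' hdc' hy' huy' hx hux hd hdc hy huy h.symm
    rfl
  · rintro ⟨⟨x, d, y⟩, ⟨⟨hd, hdc, -⟩, ⟨hx, hux⟩, ⟨hy, huy⟩, rfl⟩, -⟩ j - hj
    exact F.isCornerUnit_of_gauss hx hux hd hdc hy huy hj

/-- Gauß decomposition: in a unital associative ℂ-algebra with a flag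
`δ : 0 = p₀ < p₁ < ⋯ < pₙ = 1` of idempotents, an invertible `g` satisfies that
`p_j g p_j` is invertible in the corner algebra `p_j A p_j` for `j = 1, …, n` iff
`g` admits a (unique) decomposition `g = x d y` with `d` invertible, `d, d⁻¹ ∈ D(δ)`,
`x ∈ N(1 - δ)` and `y ∈ N(δ)`. -/
theorem stmt_11 (A : Type*) [Ring A] [Algebra ℂ A]
    (n : ℕ) (hn : 1 ≤ n) (p : ℕ → A)
    (h0 : p 0 = 0) (h1 : p n = 1)
    (hid : ∀ k ≤ n, p k * p k = p k)
    (hord : ∀ k < n, p (k + 1) * p k = p k ∧ p k * p (k + 1) = p k ∧ p k ≠ p (k + 1))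
    (g : A) (hg : IsUnit g) :
    (∀ j, 1 ≤ j → j ≤ n →
      ∃ w : A, p j * w * p j = w ∧ (p j * g * p j) * w = p j ∧ w * (p j * g * p j) = p j)
    ↔
    ∃! t : A × A × A,
      (IsUnit t.2.1 ∧ (∀ k ≤ n, t.2.1 * p k = p k * t.2.1) ∧
        (∃ d' : A, t.2.1 * d' = 1 ∧ d' * t.2.1 = 1 ∧ ∀ k ≤ n, d' * p k = p k * d')) ∧
      ((∀ k ≤ n, t.1 * (1 - p k) = (1 - p k) * t.1 * (1 - p k)) ∧
        (∑ k ∈ Finset.range n, (p (k + 1) - p k) * t.1 * (p (k + 1) - p k)) = 1) ∧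
      ((∀ k ≤ n, t.2.2 * p k = p k * t.2.2 * p k) ∧
        (∑ k ∈ Finset.range n, (p (k + 1) - p k) * t.2.2 * (p (k + 1) - p k)) = 1) ∧
      g = t.1 * t.2.1 * t.2.2 :=
  stmt_11_general A n p h0 h1 hid hord g hg
end

section
/- Let A be a hermitian unital associative ℂ-algebra with involution, and let e ∈ A be an idempotent. Then 1 − (e* − e) is invertible in A, and p := e (1 − (e* − e))⁻¹ is the unique element of A satisfying p = p* = p², ep = p, and pe = e. -/
/-!
The skew-adjoint element `s = e* - e` becomes self-adjoint after multiplication by `i`, so in a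
hermitian algebra its spectrum lies on the imaginary axis; in particular `u = 1 - s` is
invertible. The identities `e* u = e* e` and `u* e = e* e` then show that `p = e u⁻¹` satisfies
`e* p = e*` and `p* = u⁻¹* u* e u⁻¹ = p`, and every self-adjoint `q` with `eq = q`, `qe = e`
satisfies `q u = e`.
-/

open Complex

def IsHermitianAlgebra (A : Type*) [Ring A] [Algebra ℂ A] [StarRing A] : Prop :=
  ∀ a : A, star a = a → ∀ z ∈ spectrum ℂ a, z.im = 0

section Hermitian

variable {A : Type*} [Ring A] [Algebra ℂ A] [StarRing A] [StarModule ℂ A]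

theorem IsHermitianAlgebra.re_eq_zero_of_mem_spectrum (hA : IsHermitianAlgebra A) {s : A}
    (hs : s ∈ skewAdjoint A) {z : ℂ} (hz : z ∈ spectrum ℂ s) : z.re = 0 := by
  have hIz : I * z ∈ spectrum ℂ (I • s) :=
    spectrum.smul_mem_smul_iff (r := Units.mk0 I I_ne_zero) |>.mpr hz
  simpa using hA _ (isSelfAdjoint_I_smul_iff_mem_skewAdjoint.mpr hs) _ hIz

theorem IsHermitianAlgebra.isUnit_one_sub (hA : IsHermitianAlgebra A) {s : A}
    (hs : s ∈ skewAdjoint A) : IsUnit (1 - s) := by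
  have h1 : (1 : ℂ) ∉ spectrum ℂ s := fun h ↦ by
    simpa using hA.re_eq_zero_of_mem_spectrum hs h
  simpa using spectrum.notMem_iff.mp h1

theorem IsHermitianAlgebra.isUnit_one_sub_star_sub (hA : IsHermitianAlgebra A) (e : A) :
    IsUnit (1 - (star e - e)) :=
  hA.isUnit_one_sub (by simp [skewAdjoint.mem_iff, star_sub])

end Hermitian

/-- The range projection of an idempotent `e`; it is junk (`Ring.inverse` of a non-unit is `0`)
unless `1 - (e* - e)` is invertible. -/
noncomputable def rangeProjection {R : Type*} [Ring R] [Star R] (e : R) : R :=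
  e * Ring.inverse (1 - (star e - e))

section Idempotent

variable {R : Type*} [Ring R] [StarRing R] {e : R}

theorem star_mul_one_sub_star_sub_of_isIdempotentElem (he : IsIdempotentElem e) :
    star e * (1 - (star e - e)) = star e * e := by
  rw [mul_sub, mul_one, mul_sub, he.star.eq]
  abel

theorem star_one_sub_star_sub_mul_of_isIdempotentElem (he : IsIdempotentElem e) :
    star (1 - (star e - e)) * e = star e * e := by
  rw [star_sub, star_one, star_sub, star_star, sub_mul, one_mul, sub_mul, he.eq]
  abel

variable (he : IsIdempotentElem e) (hu : IsUnit (1 - (star e - e)))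
include he hu

theorem star_mul_rangeProjection : star e * rangeProjection e = star e := by
  rw [rangeProjection, ← mul_assoc, ← star_mul_one_sub_star_sub_of_isIdempotentElem he,
    mul_assoc, Ring.mul_inverse_cancel _ hu, mul_one]

theorem isSelfAdjoint_rangeProjection : IsSelfAdjoint (rangeProjection e) := by
  have hv : star (Ring.inverse (1 - (star e - e))) * star (1 - (star e - e)) = 1 := by
    rw [← star_mul, Ring.mul_inverse_cancel _ hu, star_one]
  calc star (rangeProjection e)
      = star (Ring.inverse (1 - (star e - e))) * (star e * rangeProjection e) := by
        rw [star_mul_rangeProjection he hu, rangeProjection, star_mul]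
    _ = rangeProjection e := by
        rw [rangeProjection, ← mul_assoc (star e),
          ← star_one_sub_star_sub_mul_of_isIdempotentElem he, ← mul_assoc, ← mul_assoc, hv,
          one_mul]

theorem rangeProjection_mul_self : rangeProjection e * e = e := by
  simpa [star_mul, (isSelfAdjoint_rangeProjection he hu).star_eq]
    using congrArg star (star_mul_rangeProjection he hu)

theorem isStarProjection_rangeProjection : IsStarProjection (rangeProjection e) := by
  refine ⟨?_, isSelfAdjoint_rangeProjection he hu⟩
  rw [IsIdempotentElem, rangeProjection, ← mul_assoc, ← rangeProjection,
    rangeProjection_mul_self he hu, rangeProjection]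

end Idempotent

theorem mul_rangeProjection_of_isIdempotentElem {R : Type*} [Ring R] [Star R] {e : R}
    (he : IsIdempotentElem e) : e * rangeProjection e = rangeProjection e := by
  rw [rangeProjection, ← mul_assoc, he.eq]

theorem eq_rangeProjection {R : Type*} [Ring R] [StarRing R] {e q : R}
    (hu : IsUnit (1 - (star e - e))) (hq : IsSelfAdjoint q) (heq : e * q = q) (hqe : q * e = e) :
    q = rangeProjection e := by
  have hqe' : q * star e = q := by
    simpa [star_mul, hq.star_eq] using congrArg star heq
  have hqu : q * (1 - (star e - e)) = e := by
    rw [mul_sub, mul_one, mul_sub, hqe', hqe]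
    abel
  calc q = q * (1 - (star e - e)) * Ring.inverse (1 - (star e - e)) := by
        rw [mul_assoc, Ring.mul_inverse_cancel _ hu, mul_one]
    _ = rangeProjection e := by rw [hqu, rangeProjection]

/-- In a hermitian unital associative ℂ-algebra with involution, for every idempotent
`e` the element `1 - (e* - e)` is invertible, and `p := e (1 - (e* - e))⁻¹` is the
unique self-adjoint idempotent with `ep = p` and `pe = e`. -/
theorem stmt_13 (A : Type*) [Ring A] [Algebra ℂ A] [StarRing A] [StarModule ℂ A]
    (hherm : ∀ a : A, star a = a → ∀ z ∈ spectrum ℂ a, z.im = 0)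
    (e : A) (he : e * e = e) :
    IsUnit (1 - (star e - e)) ∧
    (star (e * Ring.inverse (1 - (star e - e))) = e * Ring.inverse (1 - (star e - e)) ∧
      (e * Ring.inverse (1 - (star e - e))) * (e * Ring.inverse (1 - (star e - e)))
        = e * Ring.inverse (1 - (star e - e)) ∧
      e * (e * Ring.inverse (1 - (star e - e))) = e * Ring.inverse (1 - (star e - e)) ∧
      (e * Ring.inverse (1 - (star e - e))) * e = e) ∧
    ∀ q : A, star q = q → q * q = q → e * q = q → q * e = e →
      q = e * Ring.inverse (1 - (star e - e)) := by
  have hu : IsUnit (1 - (star e - e)) := IsHermitianAlgebra.isUnit_one_sub_star_sub hherm e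
  have hp : IsStarProjection (rangeProjection e) := isStarProjection_rangeProjection he hu
  exact ⟨hu, ⟨hp.isSelfAdjoint.star_eq, hp.isIdempotentElem.eq,
    mul_rangeProjection_of_isIdempotentElem he, rangeProjection_mul_self he hu⟩,
    fun q hq _ heq hqe ↦ eq_rangeProjection hu hq heq hqe⟩
end

section
/- Let A be a unital associative ℂ-algebra with involution, let a = a* ∈ A, and let g ∈ M₂(A) be the matrix with rows (1, 0) and (a, 1). If there exist a unitary u ∈ M₂(A) (u* u = u u* = 1) and an invertible b ∈ M₂(A) such that both b and b⁻¹ are upper triangular (i.e. have zero (2,1) entry) and g = u b, then 1 + a² is invertible in A. -/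
/-!
Since `u` is unitary, `g* g = b* b`. The `(0,0)` entry of `g* g` is `1 + a²`, and, as the first
column of `b` vanishes below the diagonal, the `(0,0)` entry of `b* b` is `(b₀₀)* b₀₀`. The same
vanishing for `b` and `b⁻¹` makes `b₀₀` invertible with inverse `(b⁻¹)₀₀`, so `1 + a²` is a unit.
-/

namespace Matrix

variable {n R : Type*} [Fintype n] [Semiring R]

theorem mul_apply_diag_of_col_eq_zero {M N : Matrix n n R} {i : n} (hN : ∀ k, k ≠ i → N k i = 0) :
    (M * N) i i = M i i * N i i := by
  rw [mul_apply]
  exact Fintype.sum_eq_single i fun k hk => by rw [hN k hk, mul_zero]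

theorem isUnit_apply_diag_of_col_eq_zero [DecidableEq n] {M N : Matrix n n R} {i : n}
    (hMN : M * N = 1) (hNM : N * M = 1) (hM : ∀ k, k ≠ i → M k i = 0)
    (hN : ∀ k, k ≠ i → N k i = 0) : IsUnit (M i i) := by
  refine isUnit_iff_exists.mpr ⟨N i i, ?_, ?_⟩
  · rw [← mul_apply_diag_of_col_eq_zero hN, hMN, one_apply_eq]
  · rw [← mul_apply_diag_of_col_eq_zero hM, hNM, one_apply_eq]

theorem star_mul_self_apply_diag_of_col_eq_zero [StarRing R] {M : Matrix n n R} {i : n}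
    (hM : ∀ k, k ≠ i → M k i = 0) : (star M * M) i i = star (M i i) * M i i := by
  rw [mul_apply_diag_of_col_eq_zero hM, star_apply]

end Matrix

theorem star_mul_mul_self_of_star_mul_self_eq_one {M : Type*} [Monoid M] [StarMul M] {u : M}
    (hu : star u * u = 1) (b : M) : star (u * b) * (u * b) = star b * b := by
  rw [star_mul, mul_assoc, ← mul_assoc (star u), hu, one_mul]

theorem stmt_16_general (A : Type*) [Ring A] [StarRing A]
    (a : A) (ha : star a = a)
    (h : ∃ u b b' : Matrix (Fin 2) (Fin 2) A,
      star u * u = 1 ∧ u * star u = 1 ∧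
      b * b' = 1 ∧ b' * b = 1 ∧
      b 1 0 = 0 ∧ b' 1 0 = 0 ∧
      (!![1, 0; a, 1] : Matrix (Fin 2) (Fin 2) A) = u * b) :
    IsUnit (1 + a * a) := by
  obtain ⟨u, b, b', hu, -, hbb', hb'b, hb, hb', hg⟩ := h
  have hb_col : ∀ k, k ≠ 0 → b k 0 = 0 := fun k hk => Fin.eq_one_of_ne_zero k hk ▸ hb
  have hb'_col : ∀ k, k ≠ 0 → b' k 0 = 0 := fun k hk => Fin.eq_one_of_ne_zero k hk ▸ hb'
  have hunit : IsUnit (b 0 0) := Matrix.isUnit_apply_diag_of_col_eq_zero hbb' hb'b hb_col hb'_col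
  have hgg : 1 + a * a = (star (!![1, 0; a, 1] : Matrix (Fin 2) (Fin 2) A) * !![1, 0; a, 1]) 0 0 := by
    simp [Matrix.mul_apply, Matrix.star_apply, ha]
  rw [hgg, hg, star_mul_mul_self_of_star_mul_self_eq_one hu,
    Matrix.star_mul_self_apply_diag_of_col_eq_zero hb_col]
  exact hunit.star.mul hunit

/-- Let `a = a*` in a unital associative ℂ-algebra with involution and let
`g = [[1,0],[a,1]] ∈ M₂(A)`. If `g = u b` with `u` unitary and `b` invertible with
`b` and `b⁻¹` upper triangular, then `1 + a²` is invertible in `A`. -/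
theorem stmt_16 (A : Type*) [Ring A] [Algebra ℂ A] [StarRing A] [StarModule ℂ A]
    (a : A) (ha : star a = a)
    (h : ∃ u b b' : Matrix (Fin 2) (Fin 2) A,
      star u * u = 1 ∧ u * star u = 1 ∧
      b * b' = 1 ∧ b' * b = 1 ∧
      b 1 0 = 0 ∧ b' 1 0 = 0 ∧
      (!![1, 0; a, 1] : Matrix (Fin 2) (Fin 2) A) = u * b) :
    IsUnit (1 + a * a) :=
  stmt_16_general A a ha h
end

section
/- Let A be a unital associative ℂ-algebra with involution and let a = a* ∈ A. Then the matrix g ∈ M₂(A) with rows (a + i·1, a) and (a, a − i·1) satisfies g (J g* J) = (J g* J) g = 1, where J = diag(1, −1); in particular g ∈ GL₂(A) with g⁻¹ = J g* J. If moreover 1 + a² is not invertible in A, then the (1,1) entry a + i·1 of g is not invertible in A. -/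
/-!
With `ι = algebraMap ℂ A I` we have `ι * ι = -1`, `star ι = -ι`, and `ι` is central, so
`J g* J = [[a - ι, -a], [-a, a + ι]]` and both products with `g` reduce, entrywise, to
`(a + ι)(a - ι) - a² = 1`. For the last claim, `star (a + ι) = a - ι`, so if `a + ι` were a
unit then so would be `(a + ι)(a - ι) = 1 + a²`.
-/

namespace Matrix

theorem star_fin_two {α : Type*} [Star α] (p q r s : α) :
    star !![p, q; r, s] = !![star p, star r; star q, star s] := by
  ext i j
  fin_cases i <;> fin_cases j <;> rfl

theorem signDiag_mul_mul_signDiag_fin_two {α : Type*} [Ring α] (p q r s : α) :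
    !![1, 0; 0, -1] * !![p, q; r, s] * !![1, 0; 0, -1] = !![p, -q; -r, s] := by
  simp

end Matrix

open Matrix

section SquareRootOfMinusOne

variable {R : Type*} [Ring R] {a e : R}

theorem add_mul_sub_of_mul_self_eq_neg_one (hc : Commute a e) (he : e * e = -1) :
    (a + e) * (a - e) = 1 + a * a := by
  rw [← hc.mul_self_sub_mul_self_eq, he, sub_neg_eq_add, add_comm]

theorem sub_mul_add_of_mul_self_eq_neg_one (hc : Commute a e) (he : e * e = -1) :
    (a - e) * (a + e) = 1 + a * a := by
  rw [← hc.mul_self_sub_mul_self_eq', he, sub_neg_eq_add, add_comm]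

theorem fin_two_add_sub_mul_sub_add_eq_one (hc : Commute a e) (he : e * e = -1) :
    !![a + e, a; a, a - e] * !![a - e, -a; -a, a + e] = 1 := by
  rw [mul_fin_two, one_fin_two, add_mul_sub_of_mul_self_eq_neg_one hc he,
    sub_mul_add_of_mul_self_eq_neg_one hc he]
  simp [((Commute.refl a).add_right hc).eq, ((Commute.refl a).sub_right hc).eq]

theorem fin_two_sub_add_mul_add_sub_eq_one (hc : Commute a e) (he : e * e = -1) :
    !![a - e, -a; -a, a + e] * !![a + e, a; a, a - e] = 1 := by
  rw [mul_fin_two, one_fin_two, add_mul_sub_of_mul_self_eq_neg_one hc he,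
    sub_mul_add_of_mul_self_eq_neg_one hc he]
  simp [((Commute.refl a).add_right hc).eq, ((Commute.refl a).sub_right hc).eq]

end SquareRootOfMinusOne

section ComplexAlgebra

variable {A : Type*} [Ring A] [Algebra ℂ A]

theorem algebraMap_I_mul_self : algebraMap ℂ A Complex.I * algebraMap ℂ A Complex.I = -1 := by
  rw [← map_mul, Complex.I_mul_I, map_neg, map_one]

theorem star_algebraMap_I [StarRing A] [StarModule ℂ A] :
    star (algebraMap ℂ A Complex.I) = -algebraMap ℂ A Complex.I := by
  rw [← algebraMap_star_comm, Complex.star_def, Complex.conj_I, map_neg]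

end ComplexAlgebra

/-- For a self-adjoint `a` in a unital associative ℂ-algebra with involution, the
matrix `g = [[a + i, a], [a, a - i]] ∈ M₂(A)` satisfies `g (J g* J) = (J g* J) g = 1`
with `J = diag(1, -1)`; in particular `g ∈ GL₂(A)` with `g⁻¹ = J g* J`. If moreover
`1 + a²` is not invertible in `A`, then the `(1,1)` entry `a + i` is not invertible. -/
theorem stmt_18 (A : Type*) [Ring A] [Algebra ℂ A] [StarRing A] [StarModule ℂ A]
    (a : A) (ha : star a = a) :
    (!![a + algebraMap ℂ A Complex.I, a; a, a - algebraMap ℂ A Complex.I] :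
        Matrix (Fin 2) (Fin 2) A) *
      ((!![1, 0; 0, -1] : Matrix (Fin 2) (Fin 2) A) *
        star (!![a + algebraMap ℂ A Complex.I, a; a, a - algebraMap ℂ A Complex.I] :
          Matrix (Fin 2) (Fin 2) A) * !![1, 0; 0, -1]) = 1 ∧
    ((!![1, 0; 0, -1] : Matrix (Fin 2) (Fin 2) A) *
        star (!![a + algebraMap ℂ A Complex.I, a; a, a - algebraMap ℂ A Complex.I] :
          Matrix (Fin 2) (Fin 2) A) * !![1, 0; 0, -1]) *
      (!![a + algebraMap ℂ A Complex.I, a; a, a - algebraMap ℂ A Complex.I] :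
        Matrix (Fin 2) (Fin 2) A) = 1 ∧
    (¬ IsUnit (1 + a * a) → ¬ IsUnit (a + algebraMap ℂ A Complex.I)) := by
  set ι := algebraMap ℂ A Complex.I
  have hc : Commute a ι := (Algebra.commutes Complex.I a).symm
  have hstar : star (a + ι) = a - ι := by rw [star_add, ha, star_algebraMap_I, sub_eq_add_neg]
  have hconj : !![1, 0; 0, -1] * star !![a + ι, a; a, a - ι] * !![1, 0; 0, -1]
      = !![a - ι, -a; -a, a + ι] := by
    rw [star_fin_two, signDiag_mul_mul_signDiag_fin_two, hstar, ha, star_sub, ha,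
      star_algebraMap_I, sub_neg_eq_add]
  refine ⟨?_, ?_, fun hsq hunit => hsq ?_⟩
  · rw [hconj]
    exact fin_two_add_sub_mul_sub_add_eq_one hc algebraMap_I_mul_self
  · rw [hconj]
    exact fin_two_sub_add_mul_add_sub_eq_one hc algebraMap_I_mul_self
  · rw [← add_mul_sub_of_mul_self_eq_neg_one hc algebraMap_I_mul_self, ← hstar]
    exact hunit.mul hunit.star
end
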